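/- Let (S,+) be a commutative semigroup and let F = {s₁, s₂, …, s_l} ⊆ S be a finite nonempty set of cardinality l. Let HC_F = {(a + n·s₁, a + n·s₂, …, a + n·s_l) : a ∈ S, n ∈ ℕ} be the set of all homothetic copies of F, which is a subsemigroup of S^l. Then for any piecewise syndetic subset M ⊆ S, the set M^l ∩ HC_F is piecewise syndetic in the semigroup HC_F. -/

import Mathlib

/-- `A` is thick relative to the subsemigroup `I` of `T`. -/
def ThickIn {T : Type*} [AddCommSemigroup T] (I A : Set T) : Prop :=
  ∀ E : Finset T, ↑E ⊆ I → E.Nonempty → ∃ z ∈ I, ∀ e ∈ E, e + z ∈ A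

/-- `A` is piecewise syndetic relative to the subsemigroup `I` of `T`. -/
def PiecewiseSyndeticIn {T : Type*} [AddCommSemigroup T] (I A : Set T) : Prop :=
  ∃ G : Finset T, ↑G ⊆ I ∧ G.Nonempty ∧ ThickIn I {s ∈ I | ∃ g ∈ G, g + s ∈ A}

/-- `A` is thick in an additive commutative semigroup. -/
def Thick {T : Type*} [AddCommSemigroup T] (A : Set T) : Prop :=
  ∀ E : Finset T, E.Nonempty → ∃ z : T, ∀ e ∈ E, e + z ∈ A

/-- `A` is piecewise syndetic. -/
def PiecewiseSyndetic {T : Type*} [AddCommSemigroup T] (A : Set T) : Prop :=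
  ∃ G : Finset T, G.Nonempty ∧ Thick {s : T | ∃ g ∈ G, g + s ∈ A}

/-- `pnsmul n x` is the sum of `x` with itself `n` times, for a positive integer `n`. -/
def pnsmul {S : Type*} [AddSemigroup S] (n : ℕ+) (x : S) : S :=
  Nat.rec (motive := fun _ => S) x (fun _ y => y + x) n.natPred

/-- `HC s` is the set of homothetic copies `(a + n·s₁, …, a + n·s_l)` of the finite set
enumerated by `s : Fin l → S`; it is a subsemigroup of `S^l`. -/
def HC {S : Type*} [AddCommSemigroup S] {l : ℕ} (s : Fin l → S) : Set (Fin l → S) :=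
  Set.range fun p : S × ℕ+ => fun i => p.1 + pnsmul p.2 (s i)

/-!
In the Stone–Čech compactification `βS`, a compact right topological semigroup, a set is
piecewise syndetic exactly when it belongs to an ultrafilter of the smallest ideal `K(βS)`.
Take `p ∈ K(βS)` with `M ∈ p`. The tuple `p̄ = (p, …, p)` lies in `K((βS)^l)` and in the closure
`E` of the principal tuples that are constant or homothetic copies of `F`. The closure `I` of the
principal homothetic copies is an ideal of `E`, so `p̄ ∈ K(E) ⊆ I`, and in fact `p̄ ∈ K(I)`. Since
`I` is the image of `β(S × ℕ+)` under the extension of `(a, n) ↦ (a + n·sᵢ)ᵢ`, `p̄` is the image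
of some `q ∈ K(β(S × ℕ+))`. Then `{(a, n) | ∀ i, a + n·sᵢ ∈ M} ∈ q` is piecewise syndetic in
`S × ℕ+`, and so is its image in `HC_F`.
-/

open Set Filter

section LeftIdeal

variable {X : Type*} [AddSemigroup X]

structure IsLeftIdeal (C : AddSubsemigroup X) (L : Set X) : Prop where
  nonempty : L.Nonempty
  subset : L ⊆ C
  add_mem : ∀ c ∈ C, ∀ x ∈ L, c + x ∈ L

structure IsMinimalLeftIdeal (C : AddSubsemigroup X) (L : Set X) : Prop
    extends IsLeftIdeal C L where
  eq_of_subset : ∀ L', IsLeftIdeal C L' → L' ⊆ L → L' = L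

structure IsIdeal (C : AddSubsemigroup X) (J : Set X) : Prop extends IsLeftIdeal C J where
  add_mem_right : ∀ x ∈ J, ∀ c ∈ C, x + c ∈ J

/-- The union of the minimal left ideals of `C`; for a compact right topological semigroup `C`
this is its smallest two-sided ideal `K(C)`. -/
def smallestIdeal (C : AddSubsemigroup X) : Set X :=
  {x | ∃ L, IsMinimalLeftIdeal C L ∧ x ∈ L}

variable {C : AddSubsemigroup X} {L : Set X}

theorem isLeftIdeal_image_add {x : X} (hx : x ∈ C) : IsLeftIdeal C ((· + x) '' C) where
  nonempty := ⟨x + x, x, hx, rfl⟩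
  subset := by
    rintro _ ⟨c, hc, rfl⟩
    exact C.add_mem hc hx
  add_mem := by
    rintro c hc _ ⟨d, hd, rfl⟩
    exact ⟨c + d, C.add_mem hc hd, add_assoc c d x⟩

theorem IsLeftIdeal.image_add_subset (hL : IsLeftIdeal C L) {x : X} (hx : x ∈ L) :
    (· + x) '' C ⊆ L := by
  rintro _ ⟨c, hc, rfl⟩
  exact hL.add_mem c hc x hx

theorem IsLeftIdeal.isMinimalLeftIdeal (hL : IsLeftIdeal C L)
    (h : ∀ x ∈ L, L ⊆ (· + x) '' C) : IsMinimalLeftIdeal C L where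
  toIsLeftIdeal := hL
  eq_of_subset L' hL' hsub := by
    obtain ⟨x, hx⟩ := hL'.nonempty
    exact hsub.antisymm ((h x (hsub hx)).trans (hL'.image_add_subset hx))

theorem IsMinimalLeftIdeal.image_add_eq (hL : IsMinimalLeftIdeal C L) {x : X} (hx : x ∈ L) :
    (· + x) '' C = L :=
  hL.eq_of_subset _ (isLeftIdeal_image_add (hL.subset hx)) (hL.image_add_subset hx)

theorem IsMinimalLeftIdeal.image_add_right (hL : IsMinimalLeftIdeal C L) {t : X} (ht : t ∈ C) :
    IsMinimalLeftIdeal C ((· + t) '' L) := by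
  refine IsLeftIdeal.isMinimalLeftIdeal ⟨hL.nonempty.image _, ?_, ?_⟩ ?_
  · rintro _ ⟨y, hy, rfl⟩
    exact C.add_mem (hL.subset hy) ht
  · rintro c hc _ ⟨y, hy, rfl⟩
    exact ⟨c + y, hL.add_mem c hc y hy, add_assoc c y t⟩
  · rintro _ ⟨y, hy, rfl⟩
    rw [← hL.image_add_eq hy, image_image]
    simp only [add_assoc, subset_refl]

theorem IsIdeal.smallestIdeal_subset {J : Set X} (hJ : IsIdeal C J) : smallestIdeal C ⊆ J := by
  rintro x ⟨L, hL, hxL⟩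
  obtain ⟨j, hj⟩ := hJ.nonempty
  have hx : x ∈ (· + (j + x)) '' C :=
    hL.image_add_eq (hL.add_mem j (hJ.subset hj) x hxL) ▸ hxL
  obtain ⟨c, hc, hcx : c + (j + x) = x⟩ := hx
  rw [← hcx, ← add_assoc]
  exact hJ.add_mem_right _ (hJ.add_mem c hc j hj) x (hL.subset hxL)

theorem add_mem_smallestIdeal_left {c x : X} (hc : c ∈ C) (hx : x ∈ smallestIdeal C) :
    c + x ∈ smallestIdeal C :=
  let ⟨L, hL, hxL⟩ := hx
  ⟨L, hL, hL.add_mem c hc x hxL⟩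

theorem add_mem_smallestIdeal_right {x c : X} (hx : x ∈ smallestIdeal C) (hc : c ∈ C) :
    x + c ∈ smallestIdeal C :=
  let ⟨_, hL, hxL⟩ := hx
  ⟨_, hL.image_add_right hc, x, hxL, rfl⟩

theorem exists_add_add_eq_of_mem_smallestIdeal {x v : X} (hx : x ∈ smallestIdeal C)
    (hv : v ∈ C) : ∃ u ∈ C, u + (v + x) = x := by
  obtain ⟨_, hL, hxL⟩ := hx
  rw [← hL.image_add_eq (hL.add_mem v hv x hxL)] at hxL
  exact hxL

end LeftIdeal

theorem pi_mem_smallestIdeal_top {ι : Type*} {X : ι → Type*} [∀ i, AddSemigroup (X i)]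
    {x : ∀ i, X i} (hx : ∀ i, x i ∈ smallestIdeal (⊤ : AddSubsemigroup (X i))) :
    x ∈ smallestIdeal (⊤ : AddSubsemigroup (∀ i, X i)) := by
  choose L hL hxL using hx
  refine ⟨univ.pi L, IsLeftIdeal.isMinimalLeftIdeal
    ⟨⟨x, fun i _ => hxL i⟩, fun _ _ => trivial,
      fun c _ y hy i _ => (hL i).add_mem (c i) trivial (y i) (hy i trivial)⟩ ?_, fun i _ => hxL i⟩
  intro z hz y hy
  have hy' : ∀ i, ∃ u, u + z i = y i := fun i => by
    obtain ⟨u, -, hu⟩ : y i ∈ (· + z i) '' univ :=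
      ((hL i).image_add_eq (hz i trivial)).symm ▸ hy i trivial
    exact ⟨u, hu⟩
  choose u hu using hy'
  exact ⟨u, trivial, funext hu⟩

section Compact

variable {X : Type*} [AddSemigroup X] [TopologicalSpace X] [CompactSpace X] [T2Space X]
  {C : AddSubsemigroup X}

theorem isClosed_image_add (hcont : ∀ q : X, Continuous (· + q)) (hC : IsClosed (C : Set X))
    (x : X) : IsClosed ((· + x) '' C) :=
  (hC.isCompact.image (hcont x)).isClosed

theorem IsMinimalLeftIdeal.isClosed (hcont : ∀ q : X, Continuous (· + q))
    (hC : IsClosed (C : Set X)) {L : Set X} (hL : IsMinimalLeftIdeal C L) : IsClosed L := by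
  obtain ⟨x, hx⟩ := hL.nonempty
  rw [← hL.image_add_eq hx]
  exact isClosed_image_add hcont hC x

theorem IsLeftIdeal.exists_isMinimalLeftIdeal_subset (hcont : ∀ q : X, Continuous (· + q))
    (hC : IsClosed (C : Set X)) {L₀ : Set X} (hL₀ : IsLeftIdeal C L₀) :
    ∃ L ⊆ L₀, IsMinimalLeftIdeal C L := by
  have hzorn : ∀ c ⊆ {L | IsLeftIdeal C L ∧ IsClosed L}, IsChain (· ⊆ ·) c → c.Nonempty →
      ∃ lb ∈ {L | IsLeftIdeal C L ∧ IsClosed L}, ∀ L ∈ c, lb ⊆ L := by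
    intro c hc hchain hcne
    have : Nonempty c := hcne.to_subtype
    refine ⟨⋂₀ c, ⟨⟨?_, ?_, ?_⟩, isClosed_sInter fun L hL => (hc hL).2⟩,
      fun L hL => sInter_subset_of_mem hL⟩
    · exact IsCompact.nonempty_sInter_of_directed_nonempty_isCompact_isClosed
        (hchain.symm.directedOn (r := fun a b : Set X => a ⊇ b))
        (fun L hL => (hc hL).1.nonempty)
        (fun L hL => (hc hL).2.isCompact) (fun L hL => (hc hL).2)
    · obtain ⟨L, hL⟩ := hcne
      exact (sInter_subset_of_mem hL).trans (hc hL).1.subset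
    · exact fun a ha y hy => mem_sInter.2 fun L hL => (hc hL).1.add_mem a ha y (hy L hL)
  -- Minimality among closed left ideals suffices: every left ideal contains a closed one, `C + y`.
  obtain ⟨x, hx⟩ := hL₀.nonempty
  obtain ⟨L, hLsub, hL⟩ := zorn_superset_nonempty _ hzorn _
    ⟨isLeftIdeal_image_add (hL₀.subset hx), isClosed_image_add hcont hC x⟩
  refine ⟨L, hLsub.trans (hL₀.image_add_subset hx), hL.prop.1.isMinimalLeftIdeal fun y hy => ?_⟩
  exact hL.2 ⟨isLeftIdeal_image_add (hL.prop.1.subset hy), isClosed_image_add hcont hC y⟩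
    (hL.prop.1.image_add_subset hy)

theorem smallestIdeal_nonempty (hcont : ∀ q : X, Continuous (· + q))
    (hC : IsClosed (C : Set X)) (hne : (C : Set X).Nonempty) : (smallestIdeal C).Nonempty := by
  obtain ⟨c, hc⟩ := hne
  obtain ⟨L, -, hL⟩ := (isLeftIdeal_image_add hc).exists_isMinimalLeftIdeal_subset hcont hC
  obtain ⟨x, hx⟩ := hL.nonempty
  exact ⟨x, L, hL, hx⟩

theorem mem_smallestIdeal_of_le (hcont : ∀ q : X, Continuous (· + q)) {T : AddSubsemigroup X}
    (hT : IsClosed (T : Set X)) (hTC : T ≤ C) {x : X} (hxT : x ∈ T)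
    (hx : x ∈ smallestIdeal C) : x ∈ smallestIdeal T := by
  obtain ⟨L, hL, hxL⟩ := hx
  obtain ⟨LT, hLT_sub, hLT⟩ :=
    (isLeftIdeal_image_add hxT).exists_isMinimalLeftIdeal_subset hcont hT
  have hLTL : LT ⊆ L := hLT_sub.trans <| by
    rintro _ ⟨t, ht, rfl⟩
    exact hL.add_mem t (hTC ht) x hxL
  -- an idempotent `u` of the compact semigroup `LT` is a right identity on `L = C + u`
  obtain ⟨u, huLT, huu⟩ := exists_idempotent_in_compact_add_subsemigroup hcont LT hLT.nonempty
    (hLT.isClosed hcont hT).isCompact fun a ha b hb => hLT.add_mem a (hLT.subset ha) b hb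
  have hxu : x ∈ (· + u) '' C := hL.image_add_eq (hLTL huLT) ▸ hxL
  obtain ⟨w, -, hw : w + u = x⟩ := hxu
  have hxu : x + u = x := by rw [← hw, add_assoc, huu]
  exact ⟨LT, hLT, hxu ▸ hLT.add_mem x hxT u huLT⟩

end Compact

theorem smallestIdeal_subset_image {X Y : Type*} [AddSemigroup X] [AddSemigroup Y]
    [TopologicalSpace Y] [CompactSpace Y] [T2Space Y] (hcont : ∀ q : Y, Continuous (· + q))
    (θ : Y →ₙ+ X) {C : AddSubsemigroup X} (hθ : range θ = C) :
    smallestIdeal C ⊆ θ '' smallestIdeal ⊤ := by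
  intro x hx
  obtain ⟨L, hL, hxL⟩ := hx
  obtain ⟨y, -⟩ : x ∈ range θ := hθ ▸ hL.subset hxL
  have hK := smallestIdeal_nonempty (C := ⊤) hcont isClosed_univ ⟨y, trivial⟩
  refine IsIdeal.smallestIdeal_subset ⟨⟨hK.image θ, ?_, ?_⟩, ?_⟩ ⟨L, hL, hxL⟩
  · rintro _ ⟨k, -, rfl⟩
    exact hθ ▸ mem_range_self k
  · rintro c hc _ ⟨k, hk, rfl⟩
    obtain ⟨v, rfl⟩ : c ∈ range θ := hθ ▸ hc
    exact ⟨v + k, add_mem_smallestIdeal_left trivial hk, map_add θ v k⟩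
  · rintro _ ⟨k, hk, rfl⟩ c hc
    obtain ⟨v, rfl⟩ : c ∈ range θ := hθ ▸ hc
    exact ⟨k + v, add_mem_smallestIdeal_right hk trivial, map_add θ k v⟩

section RightTopological

variable {X : Type*} [AddSemigroup X] [TopologicalSpace X]

theorem add_mem_closure_of_continuous (hcont : ∀ q : X, Continuous (· + q)) {A B D : Set X}
    (hA : ∀ a ∈ A, Continuous (a + ·)) (hAB : ∀ a ∈ A, ∀ b ∈ B, a + b ∈ D) {x y : X}
    (hx : x ∈ closure A) (hy : y ∈ closure B) : x + y ∈ closure D := by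
  have hAy : ∀ a ∈ A, a + y ∈ closure D := fun a ha => map_mem_closure (hA a ha) hy (hAB a ha)
  simpa using map_mem_closure (hcont y) hx hAy

def AddSubsemigroup.closureOfContinuousAdd (hcont : ∀ q : X, Continuous (· + q))
    (T : AddSubsemigroup X) (hT : ∀ t ∈ T, Continuous (t + ·)) : AddSubsemigroup X where
  carrier := _root_.closure T
  add_mem' := add_mem_closure_of_continuous hcont hT fun _ ha _ hb => T.add_mem ha hb

theorem mem_smallestIdeal_closureOfContinuousAdd [CompactSpace X] [T2Space X]
    (hcont : ∀ q : X, Continuous (· + q)) {T R : AddSubsemigroup X}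
    (hT : ∀ t ∈ T, Continuous (t + ·)) (hRT : R ≤ T) (hR : (R : Set X).Nonempty)
    (hRideal : ∀ t ∈ T, ∀ r ∈ R, t + r ∈ R ∧ r + t ∈ R) {x : X}
    (hxT : x ∈ closure (T : Set X)) (hx : x ∈ smallestIdeal ⊤) :
    x ∈ smallestIdeal (R.closureOfContinuousAdd hcont fun r hr => hT r (hRT hr)) := by
  set E := T.closureOfContinuousAdd hcont hT
  set I := R.closureOfContinuousAdd hcont fun r hr => hT r (hRT hr)
  have hIE : IsIdeal E I :=
    ⟨⟨hR.mono subset_closure, closure_mono hRT, fun _ hc _ hy =>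
      add_mem_closure_of_continuous hcont hT (fun t ht r hr => (hRideal t ht r hr).1) hc hy⟩,
      fun _ hy _ hc => add_mem_closure_of_continuous hcont (fun r hr => hT r (hRT hr))
        (fun r hr t ht => (hRideal t ht r hr).2) hy hc⟩
  have hxE : x ∈ smallestIdeal E := mem_smallestIdeal_of_le hcont isClosed_closure le_top hxT hx
  exact mem_smallestIdeal_of_le hcont isClosed_closure le_top (hIE.smallestIdeal_subset hxE) hx

end RightTopological

namespace Ultrafilter

attribute [local instance] Ultrafilter.add Ultrafilter.addSemigroup

variable {α β : Type*}

theorem mem_add_iff [Add α] {U V : Ultrafilter α} {A : Set α} :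
    A ∈ U + V ↔ {a | {b | a + b ∈ A} ∈ V} ∈ U :=
  Iff.rfl

theorem pure_add_pure [Add α] (a b : α) : (pure a : Ultrafilter α) + pure b = pure (a + b) :=
  rfl

theorem continuous_pure_add [Add α] (a : α) : Continuous ((pure a : Ultrafilter α) + ·) :=
  ultrafilterBasis_is_basis.continuous_iff.2 <| forall_mem_range.2 fun A ↦
    ultrafilter_isOpen_basic {b | a + b ∈ A}

theorem continuous_map (f : α → β) : Continuous (map f) :=
  ultrafilterBasis_is_basis.continuous_iff.2 <| forall_mem_range.2 fun A ↦
    ultrafilter_isOpen_basic (f ⁻¹' A)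

theorem map_add [Add α] [Add β] (f : α →ₙ+ β) (U V : Ultrafilter α) :
    (U + V).map f = U.map f + V.map f :=
  Ultrafilter.ext fun A => by simp [mem_add_iff, mem_map, _root_.map_add]

variable {ι : Type*}

def piPure [Add α] : (ι → α) →ₙ+ (ι → Ultrafilter α) where
  toFun f i := pure (f i)
  map_add' f g := funext fun i => (pure_add_pure (f i) (g i)).symm

def mapPi [Add α] [Add β] (f : α →ₙ+ (ι → β)) : Ultrafilter α →ₙ+ (ι → Ultrafilter β) where
  toFun u i := u.map (f · i)
  map_add' u v := funext fun i => map_add ((Pi.evalAddHom (fun _ => β) i).comp f) u v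

theorem range_mapPi [Add α] [Add β] (f : α →ₙ+ (ι → β)) :
    range (mapPi f) = closure (range fun a i => (pure (f a i) : Ultrafilter β)) := by
  have hcont : Continuous (mapPi f) := continuous_pi fun i => continuous_map (f · i)
  rw [← image_univ, ← denseRange_pure.closure_range,
    image_closure_of_isCompact (isClosed_closure.isCompact) hcont.continuousOn, ← range_comp]
  rfl

end Ultrafilter

section PiecewiseSyndetic

attribute [local instance] Ultrafilter.add Ultrafilter.addSemigroup

variable {T : Type*} [AddCommSemigroup T]

theorem Thick.exists_ultrafilter_forall_mem_add [Nonempty T] {D : Set T} (hD : Thick D) :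
    ∃ w : Ultrafilter T, ∀ u : Ultrafilter T, D ∈ u + w := by
  classical
  obtain ⟨w, hw⟩ := Ultrafilter.exists_ultrafilter_of_finite_inter_nonempty
    (range fun a => {x | a + x ∈ D}) fun 𝒯 h𝒯 => by
      obtain ⟨E, -, rfl⟩ :=
        Finset.subset_set_image_iff.1 (image_univ (f := fun a => {x | a + x ∈ D}) ▸ h𝒯)
      obtain ⟨z, hz⟩ := hD (insert (Classical.arbitrary T) E) (Finset.insert_nonempty _ _)
      exact ⟨z, by simpa using fun e he => hz e (Finset.mem_insert_of_mem he)⟩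
  refine ⟨w, fun u => ?_⟩
  have hall : {a | {x | a + x ∈ D} ∈ w} = univ := eq_univ_of_forall fun a => hw ⟨a, rfl⟩
  exact Ultrafilter.mem_add_iff.2 (hall ▸ univ_mem)

theorem PiecewiseSyndetic.exists_mem_smallestIdeal {M : Set T} (hM : PiecewiseSyndetic M) :
    ∃ p ∈ smallestIdeal (⊤ : AddSubsemigroup (Ultrafilter T)), M ∈ p := by
  obtain ⟨G, hG, hthick⟩ := hM
  have : Nonempty T := hG.to_subtype.map Subtype.val
  obtain ⟨w, hw⟩ := hthick.exists_ultrafilter_forall_mem_add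
  obtain ⟨L, hLsub, hL⟩ := IsLeftIdeal.exists_isMinimalLeftIdeal_subset
    Ultrafilter.continuous_add_left isClosed_univ
    (isLeftIdeal_image_add (AddSubsemigroup.mem_top w))
  obtain ⟨q, hq⟩ := hL.nonempty
  obtain ⟨u, -, rfl⟩ := hLsub hq
  have hGq : (⋃ g ∈ (G : Set T), {x | g + x ∈ M}) ∈ u + w := by
    convert hw u using 1
    ext
    simp
  obtain ⟨g, -, hg⟩ := (Ultrafilter.finite_biUnion_mem_iff G.finite_toSet).1 hGq
  exact ⟨pure g + (u + w), add_mem_smallestIdeal_left trivial ⟨L, hL, hq⟩,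
    Ultrafilter.mem_add_iff.2 (Ultrafilter.mem_pure.2 hg)⟩

theorem piecewiseSyndetic_of_mem_smallestIdeal {A : Set T} {p : Ultrafilter T}
    (hp : p ∈ smallestIdeal ⊤) (hA : A ∈ p) : PiecewiseSyndetic A := by
  set B := {t | {x | t + x ∈ A} ∈ p}
  have hB : ∃ G : Finset T, G.Nonempty ∧ ∀ y, ∃ t ∈ G, t + y ∈ B := by
    by_contra! hB
    have : Nonempty T := (p.nonempty_of_mem univ_mem).to_subtype.map Subtype.val
    obtain ⟨w, hw⟩ := Thick.exists_ultrafilter_forall_mem_add (D := Bᶜ) hB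
    obtain ⟨u, -, hu⟩ := exists_add_add_eq_of_mem_smallestIdeal hp (AddSubsemigroup.mem_top w)
    rw [← hu, ← add_assoc] at hA
    exact (u + w).compl_notMem_iff.2 hA (hw u)
  obtain ⟨G, hG, hGB⟩ := hB
  refine ⟨G, hG, fun E _ => ?_⟩
  have hE : ∀ᶠ z in p, ∀ e ∈ E, ∃ g ∈ G, g + (e + z) ∈ A := by
    refine (eventually_all_finset E).2 fun e _ => ?_
    obtain ⟨t, ht, hte⟩ := hGB e
    exact Filter.Eventually.mono hte fun z hz => ⟨t, ht, by rwa [← add_assoc]⟩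
  exact hE.exists

theorem PiecewiseSyndetic.image {T' : Type*} [AddCommSemigroup T'] (φ : T →ₙ+ T') {A : Set T}
    (hA : PiecewiseSyndetic A) : PiecewiseSyndeticIn (range φ) (φ '' A) := by
  classical
  obtain ⟨G, hG, hthick⟩ := hA
  refine ⟨G.image φ, by simp, hG.image φ, fun E hE hEne => ?_⟩
  obtain ⟨E, -, rfl⟩ := Finset.subset_set_image_iff.1 (image_univ (f := φ) ▸ hE)
  obtain ⟨z, hz⟩ := hthick E (Finset.image_nonempty.1 hEne)
  refine ⟨φ z, mem_range_self z, Finset.forall_mem_image.2 fun e he => ?_⟩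
  obtain ⟨g, hg, hgA⟩ := hz e he
  exact ⟨⟨e + z, map_add φ e z⟩, φ g, Finset.mem_image_of_mem φ hg, g + (e + z), hgA,
    by simp only [map_add]⟩

theorem PiecewiseSyndeticIn.mono {I A B : Set T} (h : PiecewiseSyndeticIn I A) (hAB : A ⊆ B) :
    PiecewiseSyndeticIn I B := by
  obtain ⟨G, hGI, hG, hthick⟩ := h
  exact ⟨G, hGI, hG, fun E hEI hE => (hthick E hEI hE).imp fun _ ⟨hzI, hz⟩ =>
    ⟨hzI, fun e he => ⟨(hz e he).1, (hz e he).2.imp fun _ ⟨hg, hgA⟩ => ⟨hg, hAB hgA⟩⟩⟩⟩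

end PiecewiseSyndetic

section HomotheticCopy

variable {S : Type*}

theorem pnsmul_succ [AddSemigroup S] (n : ℕ+) (x : S) :
    pnsmul (n + 1) x = pnsmul n x + x := by
  have h : (n + 1).natPred = n.natPred + 1 := by
    simp only [PNat.natPred, PNat.add_coe, PNat.val_ofNat]
    have := n.pos
    omega
  simp only [pnsmul, h]

theorem pnsmul_add [AddSemigroup S] (m n : ℕ+) (x : S) :
    pnsmul (m + n) x = pnsmul m x + pnsmul n x := by
  induction n using PNat.recOn with
  | one => exact pnsmul_succ m x
  | succ n ih => rw [← add_assoc, pnsmul_succ, pnsmul_succ, ih, add_assoc]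

variable [AddCommSemigroup S] {ι : Type*}

def homotheticCopy (s : ι → S) : S × ℕ+ →ₙ+ (ι → S) where
  toFun r i := r.1 + pnsmul r.2 (s i)
  map_add' r r' := funext fun i => by
    simp only [Prod.fst_add, Prod.snd_add, pnsmul_add, Pi.add_apply, add_add_add_comm]

theorem homotheticCopy_const_add (s : ι → S) (a : S) (r : S × ℕ+) :
    homotheticCopy s (a + r.1, r.2) = (fun _ => a) + homotheticCopy s r :=
  funext fun _ => add_assoc _ _ _

def constOrHomotheticCopy (s : ι → S) : AddSubsemigroup (ι → S) where
  carrier := range (fun a _ => a) ∪ range (homotheticCopy s)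
  add_mem' := by
    rintro _ _ (⟨a, rfl⟩ | ⟨r, rfl⟩) (⟨b, rfl⟩ | ⟨r', rfl⟩)
    · exact Or.inl ⟨a + b, rfl⟩
    · exact Or.inr ⟨(a + r'.1, r'.2), homotheticCopy_const_add s a r'⟩
    · exact Or.inr ⟨(b + r.1, r.2), (homotheticCopy_const_add s b r).trans (add_comm _ _)⟩
    · exact Or.inr ⟨r + r', map_add _ r r'⟩

theorem add_mem_range_homotheticCopy {s : ι → S} {v : ι → S}
    (hv : v ∈ constOrHomotheticCopy s) (r : S × ℕ+) :
    v + homotheticCopy s r ∈ range (homotheticCopy s) := by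
  rcases hv with ⟨a, rfl⟩ | ⟨r', rfl⟩
  · exact ⟨(a + r.1, r.2), homotheticCopy_const_add s a r⟩
  · exact ⟨r' + r, map_add _ r' r⟩

attribute [local instance] Ultrafilter.add Ultrafilter.addSemigroup

theorem PiecewiseSyndetic.preimage_homotheticCopy [Finite ι] (s : ι → S) {M : Set S}
    (hM : PiecewiseSyndetic M) :
    PiecewiseSyndetic (homotheticCopy s ⁻¹' {f | ∀ i, f i ∈ M}) := by
  obtain ⟨p, hpK, hMp⟩ := hM.exists_mem_smallestIdeal
  have : Nonempty S := (p.nonempty_of_mem univ_mem).to_subtype.map Subtype.val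
  have hcont : ∀ q : ι → Ultrafilter S, Continuous (· + q) := fun q =>
    continuous_pi fun i => (Ultrafilter.continuous_add_left (q i)).comp (continuous_apply i)
  set j : (ι → S) →ₙ+ (ι → Ultrafilter S) := Ultrafilter.piPure
  set T := (constOrHomotheticCopy s).map j
  set R := (j.comp (homotheticCopy s)).srange
  have hT : ∀ t ∈ T, Continuous (t + ·) := by
    rintro _ ⟨v, -, rfl⟩
    exact continuous_pi fun i =>
      (Ultrafilter.continuous_pure_add (v i)).comp (continuous_apply i)
  have hRT : R ≤ T := by
    rintro _ ⟨r, rfl⟩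
    exact ⟨homotheticCopy s r, Or.inr (mem_range_self r), rfl⟩
  have hRideal : ∀ t ∈ T, ∀ r ∈ R, t + r ∈ R ∧ r + t ∈ R := by
    rintro _ ⟨v, hv, rfl⟩ _ ⟨r, rfl⟩
    obtain ⟨r', hr'⟩ := add_mem_range_homotheticCopy hv r
    refine ⟨⟨r', ?_⟩, ⟨r', ?_⟩⟩
    · rw [AddHom.comp_apply, hr', map_add]
      rfl
    · rw [AddHom.comp_apply, hr', add_comm, map_add]
      rfl
  have hpT : (fun _ => p) ∈ closure (T : Set (ι → Ultrafilter S)) := by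
    refine map_mem_closure (continuous_pi fun _ => continuous_id) (denseRange_pure p) ?_
    rintro _ ⟨a, rfl⟩
    exact ⟨fun _ => a, Or.inl ⟨a, rfl⟩, rfl⟩
  have hpI := mem_smallestIdeal_closureOfContinuousAdd hcont hT hRT
    ⟨_, mem_range_self (Classical.arbitrary _)⟩ hRideal hpT
    (pi_mem_smallestIdeal_top fun _ => hpK)
  obtain ⟨q, hqK, hq⟩ := smallestIdeal_subset_image Ultrafilter.continuous_add_left
    (Ultrafilter.mapPi (homotheticCopy s)) (Ultrafilter.range_mapPi _) hpI
  refine piecewiseSyndetic_of_mem_smallestIdeal hqK (eventually_all.2 fun i => ?_)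
  have hqi : q.map (homotheticCopy s · i) = p := congr_fun hq i
  exact Ultrafilter.mem_map.1 (hqi ▸ hMp)

end HomotheticCopy

theorem stmt9_general {S : Type*} [AddCommSemigroup S] (l : ℕ)
    (s : Fin l → S)
    (M : Set S) (hM : PiecewiseSyndetic M) :
    PiecewiseSyndeticIn (HC s) ({f : Fin l → S | ∀ i, f i ∈ M} ∩ HC s) :=
  ((hM.preimage_homotheticCopy s).image (homotheticCopy s)).mono <| by
    rintro _ ⟨r, hr, rfl⟩
    exact ⟨hr, r, rfl⟩

/-- For a commutative semigroup `S`, a finite set `F = {s₁, …, s_l}` of cardinality `l`,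
and a piecewise syndetic `M ⊆ S`, the set `M^l ∩ HC_F` is piecewise syndetic in the
semigroup `HC_F`. -/
theorem stmt9 {S : Type*} [AddCommSemigroup S] (l : ℕ) (hl : 0 < l)
    (s : Fin l → S) (hs : Function.Injective s)
    (M : Set S) (hM : PiecewiseSyndetic M) :
    PiecewiseSyndeticIn (HC s) ({f : Fin l → S | ∀ i, f i ∈ M} ∩ HC s) :=
  stmt9_general l s M hM
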